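/- If the k-th roots of a nonreal complex number z in the upper half-plane from the previous count are as stated, then for two nonreal complex numbers τ and σ whose imaginary parts have the same sign, the equations ρ^k = τ and ρ^k = σ have the same number of solutions in the open upper half-plane. -/

import Mathlib

/-!
The roots of `ρ ^ k = z` with `0 < arg ρ < π` are the `exp ((log z + 2πin) / k)` with
`arg z + 2πn ∈ (0, kπ)`, one for each such integer `n`. As `0` and `kπ` are multiples of `π`, whether
`arg z + 2πn` lies in `(0, kπ)` only depends on which of the intervals `(-π, 0)`, `(0, π)` contains
`arg z`, that is, on the sign of `Im z`.
-/

open Complex Set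
open scoped Real

lemma mem_Ioo_intCast_mul_iff {p x : ℝ} (hp : 0 < p) {c : ℤ}
    (hx : x ∈ Ioo (c * p) ((c + 1) * p)) (m n : ℤ) :
    x ∈ Ioo (m * p) (n * p) ↔ m ≤ c ∧ c + 1 ≤ n := by
  obtain ⟨hcx, hxc⟩ := hx
  constructor
  · rintro ⟨hmx, hxn⟩
    have hm : (m : ℝ) < c + 1 := lt_of_mul_lt_mul_right (hmx.trans hxc) hp.le
    have hn : (c : ℝ) < n := lt_of_mul_lt_mul_right (hcx.trans hxn) hp.le
    constructor
    · exact Int.lt_add_one_iff.mp (by exact_mod_cast hm)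
    · exact Int.add_one_le_iff.mpr (by exact_mod_cast hn)
  · rintro ⟨hm, hn⟩
    have hm : (m : ℝ) ≤ c := by exact_mod_cast hm
    have hn : (c : ℝ) + 1 ≤ n := by exact_mod_cast hn
    exact ⟨lt_of_le_of_lt (by gcongr) hcx, lt_of_lt_of_le hxc (by gcongr)⟩

namespace Complex

lemma arg_mem_Ioo_of_im_pos {z : ℂ} (hz : 0 < z.im) : arg z ∈ Ioo 0 π :=
  ⟨(arg_nonneg_iff.2 hz.le).lt_of_ne fun h => hz.ne' (arg_eq_zero_iff.1 h.symm).2,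
    arg_lt_pi_iff.2 (Or.inr hz.ne')⟩

lemma arg_mem_Ioo_of_im_neg {z : ℂ} (hz : z.im < 0) : arg z ∈ Ioo (-π) 0 :=
  ⟨neg_pi_lt_arg z, arg_neg_iff.2 hz⟩

lemma exists_int_arg_mem_Ioo_of_im_mul_im_pos {τ σ : ℂ} (h : 0 < τ.im * σ.im) :
    ∃ c : ℤ, arg τ ∈ Ioo (c * π) ((c + 1) * π) ∧ arg σ ∈ Ioo (c * π) ((c + 1) * π) := by
  rcases mul_pos_iff.1 h with ⟨hτ, hσ⟩ | ⟨hτ, hσ⟩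
  · exact ⟨0, by simpa using arg_mem_Ioo_of_im_pos hτ, by simpa using arg_mem_Ioo_of_im_pos hσ⟩
  · exact ⟨-1, by simpa using arg_mem_Ioo_of_im_neg hτ, by simpa using arg_mem_Ioo_of_im_neg hσ⟩

/-- The integers `n` for which the `k`-th root `exp ((log z + 2πin) / k)` of `z` lies in the open
upper half-plane. -/
def upperRootIndices (k : ℕ) (z : ℂ) : Set ℤ :=
  {n | arg z + 2 * π * n ∈ Ioo 0 (k * π)}

lemma upperRootIndices_eq_of_im_mul_im_pos (k : ℕ) {τ σ : ℂ} (h : 0 < τ.im * σ.im) :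
    upperRootIndices k τ = upperRootIndices k σ := by
  obtain ⟨c, hτ, hσ⟩ := exists_int_arg_mem_Ioo_of_im_mul_im_pos h
  have shift : ∀ (x : ℝ) (n : ℤ), x ∈ Ioo (c * π) ((c + 1) * π) →
      x + 2 * π * n ∈ Ioo (((c + 2 * n : ℤ) : ℝ) * π) (((c + 2 * n : ℤ) + 1 : ℝ) * π) := by
    rintro x n ⟨h₁, h₂⟩
    push_cast
    constructor <;> linarith
  ext n
  have hIoo : Ioo (0 : ℝ) (k * π) = Ioo (((0 : ℤ) : ℝ) * π) (((k : ℤ) : ℝ) * π) := by simp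
  simp only [upperRootIndices, mem_ofPred_eq, hIoo,
    mem_Ioo_intCast_mul_iff Real.pi_pos (shift _ n hτ),
    mem_Ioo_intCast_mul_iff Real.pi_pos (shift _ n hσ)]

noncomputable def rootOfIndex (k : ℕ) (z : ℂ) (n : ℤ) : ℂ :=
  exp ((log z + 2 * π * n * I) / k)

lemma im_log_add_div (k : ℕ) (z : ℂ) (n : ℤ) :
    ((log z + 2 * π * n * I) / k).im = (arg z + 2 * π * n) / k := by
  rw [show (k : ℂ) = ((k : ℝ) : ℂ) by push_cast; rfl, div_ofReal_im]
  simp [log_im]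

lemma im_log_add_div_mem_Ioo {k : ℕ} (hk : 0 < k) {z : ℂ} {n : ℤ}
    (hn : n ∈ upperRootIndices k z) : ((log z + 2 * π * n * I) / k).im ∈ Ioo 0 π := by
  have hkR : (0 : ℝ) < k := by exact_mod_cast hk
  obtain ⟨h₁, h₂⟩ := hn
  rw [im_log_add_div]
  exact ⟨div_pos h₁ hkR, (div_lt_iff₀ hkR).2 (by linarith)⟩

lemma injOn_rootOfIndex {k : ℕ} (hk : 0 < k) (z : ℂ) :
    InjOn (rootOfIndex k z) (upperRootIndices k z) := by
  intro n hn m hm hnm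
  have hkC : (k : ℂ) ≠ 0 := Nat.cast_ne_zero.2 hk.ne'
  have log_rootOfIndex : ∀ j ∈ upperRootIndices k z,
      log (rootOfIndex k z j) = (log z + 2 * π * j * I) / k := fun j hj =>
    have hj := im_log_add_div_mem_Ioo hk hj
    log_exp (by linarith [Real.pi_pos, hj.1]) hj.2.le
  have h := congrArg log hnm
  rw [log_rootOfIndex n hn, log_rootOfIndex m hm, div_left_inj' hkC, add_right_inj] at h
  have h' : 2 * π * I * n = 2 * π * I * m := by linear_combination h
  exact_mod_cast mul_left_cancel₀ two_pi_I_ne_zero h'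

lemma setOf_pow_eq_im_pos_eq_image {k : ℕ} (hk : 0 < k) {z : ℂ} (hz : z ≠ 0) :
    {ρ : ℂ | ρ ^ k = z ∧ 0 < ρ.im} = rootOfIndex k z '' upperRootIndices k z := by
  have hkC : (k : ℂ) ≠ 0 := Nat.cast_ne_zero.2 hk.ne'
  ext ρ
  constructor
  · rintro ⟨hρk, hρ⟩
    have hρ0 : ρ ≠ 0 := by rintro rfl; simp [zero_pow hk.ne', hz.symm] at hρk
    have hexp : exp (k * log ρ) = exp (log z) := by
      rw [exp_nat_mul, exp_log hρ0, exp_log hz, hρk]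
    obtain ⟨n, hn⟩ := exp_eq_exp_iff_exists_int.1 hexp
    have hlog : log ρ = (log z + 2 * π * n * I) / k := by
      rw [eq_div_iff hkC]; linear_combination hn
    have harg : arg z + 2 * π * n = k * arg ρ := by
      rw [← log_im ρ, hlog, im_log_add_div, mul_div_cancel₀ _ (by exact_mod_cast hk.ne')]
    obtain ⟨h₁, h₂⟩ := arg_mem_Ioo_of_im_pos hρ
    refine ⟨n, ?_, by rw [rootOfIndex, ← hlog, exp_log hρ0]⟩
    rw [upperRootIndices, mem_ofPred_eq, harg]
    exact ⟨by positivity, by gcongr⟩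
  · rintro ⟨n, hn, rfl⟩
    constructor
    · rw [rootOfIndex, ← exp_nat_mul, mul_div_cancel₀ _ hkC, exp_add, exp_log hz,
        show 2 * (π : ℂ) * n * I = n * (2 * π * I) by ring, exp_int_mul_two_pi_mul_I, mul_one]
    · have him := im_log_add_div_mem_Ioo hk hn
      rw [rootOfIndex, exp_im]
      exact mul_pos (Real.exp_pos _) (Real.sin_pos_of_pos_of_lt_pi him.1 him.2)

lemma ncard_setOf_pow_eq_im_pos {k : ℕ} (hk : 0 < k) {z : ℂ} (hz : z ≠ 0) :
    {ρ : ℂ | ρ ^ k = z ∧ 0 < ρ.im}.ncard = (upperRootIndices k z).ncard := by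
  rw [setOf_pow_eq_im_pos_eq_image hk hz, (injOn_rootOfIndex hk z).ncard_image]

end Complex

/-- For nonreal complex numbers `τ`, `σ` whose imaginary parts have the same sign,
the equations `ρ^k = τ` and `ρ^k = σ` have the same number of solutions in the
open upper half-plane. -/
theorem stmt_2 (k : ℕ) (hk : 0 < k) (τ σ : ℂ) (hτ : τ ≠ 0) (hσ : σ ≠ 0)
    (h : 0 < τ.im * σ.im) :
    Set.ncard {ρ : ℂ | ρ ^ k = τ ∧ 0 < ρ.im} =
      Set.ncard {ρ : ℂ | ρ ^ k = σ ∧ 0 < ρ.im} := by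
  rw [Complex.ncard_setOf_pow_eq_im_pos hk hτ, Complex.ncard_setOf_pow_eq_im_pos hk hσ,
    Complex.upperRootIndices_eq_of_im_mul_im_pos k h]
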